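/- arXiv:1903.08059 — 2 statements merged into one kernel-verified Lean document; each statement's English description precedes it below -/
import Mathlib

section
/- Let t > 1 and r ≥ 1 be integers and n ≥ r + 1. The maximum of s_t(G) over all graphs G on n vertices with maximum degree at most r (i.e., S_{r+1}-free graphs) equals n·C(r,t) if n·r is even, and equals (n−1)·C(r,t) + C(r−1,t) if n·r is odd. -/
/-!
Since `d ↦ C(d, t)` is monotone, a graph of maximum degree at most `r` on `n` vertices has
`s_t ≤ n C(r, t)`; when `n r` is odd the degree sum `2|E|` cannot equal `n r`, so some vertex has
degree at most `r - 1`, which gives the second bound.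

For the lower bound, the circulant graph on `Fin n` with jumps `±1, …, ±⌊r/2⌋` is
`2⌊r/2⌋`-regular. For odd `r` add the matching `i ~ i + ⌊n/2⌋` (`i < ⌊n/2⌋`), whose jumps
`±⌊n/2⌋` are new and which misses at most the last vertex. All degrees are then `r`, except that
the last vertex may have degree `r - 1`, and the parity of the degree sum decides which.
-/

open Finset SimpleGraph

theorem Fintype.sum_eq_add_card_sub_one_nsmul {ι M : Type*} [Fintype ι] [DecidableEq ι]
    [AddCommMonoid M] {f : ι → M} {a : M} (i₀ : ι) (h : ∀ i ≠ i₀, f i = a) :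
    ∑ i, f i = f i₀ + (Fintype.card ι - 1) • a := by
  rw [Fintype.sum_eq_add_sum_compl i₀, sum_eq_card_nsmul fun i hi => h i (by simpa using hi),
    card_compl, card_singleton]

theorem Fintype.sum_le_add_card_sub_one_nsmul {ι M : Type*} [Fintype ι] [DecidableEq ι]
    [AddCommMonoid M] [PartialOrder M] [IsOrderedAddMonoid M] {f : ι → M} {a : M} (i₀ : ι)
    (h : ∀ i ≠ i₀, f i ≤ a) :
    ∑ i, f i ≤ f i₀ + (Fintype.card ι - 1) • a := by
  rw [Fintype.sum_eq_add_sum_compl i₀, ← card_singleton i₀, ← card_compl]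
  gcongr
  exact sum_le_card_nsmul _ _ _ fun i hi => h i (by simpa using hi)

namespace SimpleGraph

variable {V : Type*} [Fintype V] (G : SimpleGraph V) [DecidableRel G.Adj] {r : ℕ}

theorem exists_degree_lt_of_odd_card_mul (hG : ∀ v, G.degree v ≤ r)
    (hodd : Odd (Fintype.card V * r)) : ∃ v, G.degree v < r := by
  by_contra! h
  have hsum : ∑ v, G.degree v = Fintype.card V * r := by
    rw [sum_congr rfl fun v _ => (hG v).antisymm (h v), sum_const, card_univ, smul_eq_mul]
  rw [← Nat.not_even_iff_odd, ← hsum, sum_degrees_eq_twice_card_edges] at hodd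
  exact hodd (even_two_mul _)

theorem degree_eq_iff_even_card_mul [DecidableEq V] (v₀ : V) (hG : ∀ v ≠ v₀, G.degree v = r)
    (hlo : r ≤ G.degree v₀ + 1) (hhi : G.degree v₀ ≤ r) :
    G.degree v₀ = r ↔ Even (Fintype.card V * r) := by
  have hsum := Fintype.sum_eq_add_card_sub_one_nsmul v₀ hG
  have hcard : Fintype.card V * r = (Fintype.card V - 1) * r + r := by
    rw [← Nat.succ_mul, Nat.succ_eq_add_one, Nat.sub_add_cancel (Fintype.card_pos_iff.2 ⟨v₀⟩)]
  have heven : Even (∑ v, G.degree v) := by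
    rw [sum_degrees_eq_twice_card_edges]; exact even_two_mul _
  rw [hsum, smul_eq_mul] at heven
  rw [hcard]
  simp only [Nat.even_iff] at heven ⊢
  omega

theorem sum_choose_degree_le (hG : ∀ v, G.degree v ≤ r) (t : ℕ) :
    ∑ v, (G.degree v).choose t ≤
      if Even (Fintype.card V * r) then Fintype.card V * r.choose t
      else (Fintype.card V - 1) * r.choose t + (r - 1).choose t := by
  classical
  split_ifs with h
  · simpa using sum_le_card_nsmul univ _ _ fun v _ => Nat.choose_le_choose t (hG v)
  · obtain ⟨v₁, hv₁⟩ := G.exists_degree_lt_of_odd_card_mul hG (Nat.not_even_iff_odd.1 h)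
    calc ∑ v, (G.degree v).choose t
          ≤ (G.degree v₁).choose t + (Fintype.card V - 1) • r.choose t :=
          Fintype.sum_le_add_card_sub_one_nsmul v₁ fun v _ => Nat.choose_le_choose t (hG v)
      _ ≤ (Fintype.card V - 1) * r.choose t + (r - 1).choose t := by
          rw [smul_eq_mul, add_comm]
          gcongr
          omega

theorem sum_choose_degree_eq [DecidableEq V] (v₀ : V) (hG : ∀ v ≠ v₀, G.degree v = r)
    (hlo : r ≤ G.degree v₀ + 1) (hhi : G.degree v₀ ≤ r) (t : ℕ) :
    ∑ v, (G.degree v).choose t =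
      if Even (Fintype.card V * r) then Fintype.card V * r.choose t
      else (Fintype.card V - 1) * r.choose t + (r - 1).choose t := by
  have hpar := G.degree_eq_iff_even_card_mul v₀ hG hlo hhi
  have hcard : 0 < Fintype.card V := Fintype.card_pos_iff.2 ⟨v₀⟩
  rw [Fintype.sum_eq_add_card_sub_one_nsmul v₀ fun v hv => congrArg (·.choose t) (hG v hv),
    smul_eq_mul]
  split_ifs with h
  · rw [hpar.2 h, add_comm, ← Nat.succ_mul, Nat.succ_eq_add_one, Nat.sub_add_cancel hcard]
  · rw [show G.degree v₀ = r - 1 by have := mt hpar.1 h; omega, add_comm]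

theorem degree_sup_of_disjoint {H : SimpleGraph V} [DecidableRel H.Adj]
    [DecidableRel (G ⊔ H).Adj] (h : Disjoint G H) (v : V) :
    (G ⊔ H).degree v = G.degree v + H.degree v := by
  rw [degree, neighborFinset_sup_of_disjoint (h := h), card_disjUnion, degree, degree]

theorem degree_circulantGraph {A : Type*} [AddGroup A] [Fintype A] [DecidableEq A]
    {s : Finset A} (hs₀ : 0 ∉ s) (hs : ∀ x ∈ s, -x ∈ s)
    [DecidableRel (circulantGraph (s : Set A)).Adj]
    (v : A) : (circulantGraph (s : Set A)).degree v = #s := by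
  rw [← card_map (addRightEmbedding v), degree]
  congr 1
  ext w
  have hneg : v - w ∈ s ↔ w - v ∈ s :=
    ⟨fun h => by simpa using hs _ h, fun h => by simpa using hs _ h⟩
  simp only [mem_neighborFinset, circulantGraph_adj, Finset.mem_coe, hneg, or_self, mem_map,
    addRightEmbedding_apply]
  constructor
  · rintro ⟨-, h⟩
    exact ⟨w - v, h, sub_add_cancel w v⟩
  · rintro ⟨x, hx, rfl⟩
    refine ⟨fun h => hs₀ ?_, by simpa using hx⟩
    rwa [← add_eq_right.mp h.symm]

end SimpleGraph

namespace Fin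

def jumpsUpTo (n k : ℕ) : Finset (Fin n) := {x | 0 < (x : ℕ) ∧ ((x : ℕ) ≤ k ∨ n ≤ x + k)}

variable {n k : ℕ}

theorem mem_jumpsUpTo {x : Fin n} :
    x ∈ jumpsUpTo n k ↔ 0 < (x : ℕ) ∧ ((x : ℕ) ≤ k ∨ n ≤ x + k) := by
  simp [jumpsUpTo]

theorem card_jumpsUpTo (h : 2 * k < n) : #(jumpsUpTo n k) = 2 * k := by
  have hmap : (jumpsUpTo n k).map valEmbedding = Icc 1 k ∪ Icc (n - k) (n - 1) := by
    ext i
    simp only [mem_map, mem_jumpsUpTo, valEmbedding_apply, mem_union, mem_Icc]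
    constructor
    · rintro ⟨x, hx, rfl⟩
      omega
    · intro hi
      exact ⟨⟨i, by omega⟩, by simp only; omega, rfl⟩
  rw [← card_map, hmap, card_union_of_disjoint, Nat.card_Icc, Nat.card_Icc]
  · omega
  · exact disjoint_left.2 fun i hi hi' => by simp only [mem_Icc] at hi hi'; omega

theorem neg_mem_jumpsUpTo [NeZero n] {x : Fin n} (hx : x ∈ jumpsUpTo n k) :
    -x ∈ jumpsUpTo n k := by
  have hx0 : x ≠ 0 := fun h => by simp [h, mem_jumpsUpTo] at hx
  rw [mem_jumpsUpTo] at hx ⊢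
  rw [val_neg, if_neg hx0]
  omega

theorem degree_circulantGraph_jumpsUpTo [NeZero n] (h : 2 * k < n)
    [DecidableRel (circulantGraph (jumpsUpTo n k : Set (Fin n))).Adj] (v : Fin n) :
    (circulantGraph (jumpsUpTo n k : Set (Fin n))).degree v = 2 * k := by
  rw [degree_circulantGraph (by simp [mem_jumpsUpTo]) fun _ => neg_mem_jumpsUpTo,
    card_jumpsUpTo h]

def halfShiftMatching (n : ℕ) : SimpleGraph (Fin n) :=
  SimpleGraph.fromRel fun a b : Fin n => (a : ℕ) < n / 2 ∧ (b : ℕ) = a + n / 2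

theorem degree_halfShiftMatching [DecidableRel (halfShiftMatching n).Adj] (v : Fin n) :
    (halfShiftMatching n).degree v = if (v : ℕ) < n / 2 * 2 then 1 else 0 := by
  rw [degree]
  split_ifs with hv
  · let w : Fin n := ⟨if (v : ℕ) < n / 2 then v + n / 2 else v - n / 2, by split_ifs <;> omega⟩
    refine card_eq_one.2 ⟨w, ?_⟩
    ext u
    rw [mem_neighborFinset, mem_singleton]
    simp only [halfShiftMatching, fromRel_adj, ne_eq, Fin.ext_iff, w]
    split_ifs <;> omega
  · refine card_eq_zero.2 (eq_empty_of_forall_notMem fun u hu => ?_)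
    rw [mem_neighborFinset] at hu
    simp only [halfShiftMatching, fromRel_adj, ne_eq, Fin.ext_iff] at hu
    omega

theorem disjoint_circulantGraph_jumpsUpTo_halfShiftMatching [NeZero n] (h : k < n / 2) :
    Disjoint (circulantGraph (jumpsUpTo n k : Set (Fin n))) (halfShiftMatching n) := by
  have key : ∀ a b : Fin n, (b : ℕ) = a + n / 2 →
      a - b ∉ jumpsUpTo n k ∧ b - a ∉ jumpsUpTo n k := by
    intro a b hab
    have hlt : a < b := by rw [Fin.lt_def]; omega
    rw [mem_jumpsUpTo, mem_jumpsUpTo, coe_sub_iff_lt.2 hlt, coe_sub_iff_le.2 hlt.le]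
    omega
  refine SimpleGraph.disjoint_left.2 fun a b hG hM => ?_
  simp only [halfShiftMatching, fromRel_adj, circulantGraph_adj, Finset.mem_coe] at hG hM
  rcases hM.2 with ⟨-, hab⟩ | ⟨-, hba⟩
  · have := key a b hab; tauto
  · have := key b a hba; tauto

theorem exists_almost_regular {r : ℕ} (h : r < n) :
    ∃ (G : SimpleGraph (Fin n)) (_ : DecidableRel G.Adj) (v₀ : Fin n),
      (∀ v ≠ v₀, G.degree v = r) ∧ r ≤ G.degree v₀ + 1 ∧ G.degree v₀ ≤ r := by
  classical
  have : NeZero n := ⟨by omega⟩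
  obtain ⟨j, rfl | rfl⟩ := Nat.even_or_odd' r
  · refine ⟨circulantGraph (jumpsUpTo n j : Set (Fin n)), inferInstance, 0, ?_⟩
    have hdeg := degree_circulantGraph_jumpsUpTo (k := j) (by omega) (n := n)
    exact ⟨fun v _ => hdeg v, (hdeg 0).symm ▸ Nat.le_succ _, (hdeg 0).le⟩
  · have hdisj :=
      disjoint_circulantGraph_jumpsUpTo_halfShiftMatching (n := n) (k := j) (by omega)
    refine ⟨circulantGraph (jumpsUpTo n j : Set (Fin n)) ⊔ halfShiftMatching n, inferInstance,
      ⟨n - 1, by omega⟩, ?_⟩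
    simp only [degree_sup_of_disjoint _ hdisj, degree_halfShiftMatching,
      degree_circulantGraph_jumpsUpTo (by omega : 2 * j < n), ne_eq, Fin.ext_iff]
    refine ⟨fun v hv => ?_, ?_⟩ <;> split_ifs <;> omega

end Fin

theorem stars_without_stars_general (r t n : ℕ) (hn : r + 1 ≤ n) :
    IsGreatest
      {m : ℕ | ∃ (G : SimpleGraph (Fin n)) (_ : DecidableRel G.Adj),
        (∀ v, G.degree v ≤ r) ∧ m = ∑ v, (G.degree v).choose t}
      (if Even (n * r) then n * r.choose t
       else (n - 1) * r.choose t + (r - 1).choose t) := by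
  obtain ⟨G, hG_dec, v₀, hG, hlo, hhi⟩ := Fin.exists_almost_regular hn
  have hmax : ∀ v, G.degree v ≤ r := fun v => by
    rcases eq_or_ne v v₀ with rfl | hv
    exacts [hhi, (hG v hv).le]
  refine ⟨⟨G, hG_dec, hmax, ?_⟩, ?_⟩
  · simpa only [Fintype.card_fin] using (G.sum_choose_degree_eq v₀ hG hlo hhi t).symm
  · rintro _ ⟨H, _, hH, rfl⟩
    simpa only [Fintype.card_fin] using H.sum_choose_degree_le hH t

/-- The maximum number of copies of the star `S_t` in an `S_{r+1}`-free graph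
(i.e., a graph with maximum degree at most `r`) on `n ≥ r+1` vertices. -/
theorem stars_without_stars (r t n : ℕ) (ht : 1 < t) (hr : 1 ≤ r) (hn : r + 1 ≤ n) :
    IsGreatest
      {m : ℕ | ∃ (G : SimpleGraph (Fin n)) (_ : DecidableRel G.Adj),
        (∀ v, G.degree v ≤ r) ∧ m = ∑ v, (G.degree v).choose t}
      (if Even (n * r) then n * r.choose t
       else (n - 1) * r.choose t + (r - 1).choose t) :=
  stars_without_stars_general r t n hn
end

section
/- Let (r,t) be a legal pair and define F(ρ₁, …, ρ_r) = Σ_{i=1}^r ρᵢ(1 − ρᵢ)^t on the simplex Δ = {ρ ∈ ℝ^r : ρᵢ ≥ 0 for all i, Σᵢ ρᵢ = 1}. Then F attains its maximum on Δ, and every maximizer ρ satisfies one of the following: (i) ρᵢ = 1/r for all i (the Turán solution); or (ii) there exist reals α, β with 0 < α < 2/(t+1) < β < 1, g(α) = g(β), (r−1)α + β = 1, such that ρ is a permutation of (α, α, …, α, β) with r−1 coordinates equal to α, and moreover for every other pair (α′, β′) with 0 < α′ < 2/(t+1) < β′ < 1, g(α′) = g(β′) and (r−1)α′ + β′ = 1,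 one has g(α′) ≤ g(α). -/
/-!
Write `f(x) = x(1-x)^t`, so that `F(ρ) = ∑ f(ρᵢ)` and `f' = g`. Moving mass between two coordinates
of a maximizer `ρ` shows that `g(ρᵢ) ≤ g(ρⱼ)` whenever `ρⱼ > 0`; since `g(0) = 1 > g(x)` for
`0 < x ≤ 1`, all `ρᵢ` are positive and all `g(ρᵢ)` coincide. As `g` decreases on `[0, c]` and
increases on `[c, 1]`, `c = 2/(t+1)`, and `f` is strictly convex on `[c, 1]`, at most one coordinate
exceeds `c`: `ρ` is constant or of the form `(α, …, α, β)` with `α < c < β`.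

The admissible `α'` are the zeros in `(0, c)` of `h(x) = g(x) - g(1 - (r-1)x)`, and `(r-1) h` is the
derivative of `φ(x) = F(x, …, x, 1 - (r-1)x)`, which is maximal at `α`; it suffices to show
`α ≤ α'`. If `2r ≤ t + 1`, then `h'` changes sign at most once on `(0, c)`, from `-` to `+`, and
`h(c) ≤ 0`, so `h` has a single zero there. If `t + 1 < 3r`, then `h''` changes sign at most once on
`(0, 1/r]`, from `+` to `-`, so `h` vanishes on no interval there. For a zero `α' < α`, the
maximality of `φ` at `α` then forces `h > 0` somewhere on `(α', α)` and `h < 0` somewhere on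
`(α, 1/r)`; as `h(α') = h(α) = h(1/r) = 0`, `h'` would change sign `+, -, +` on `(α', 1/r)`.
-/

/-- A pair `(r,t)` is legal. -/
def Legal (r t : ℕ) : Prop :=
  (9 ≤ r ∧ 3 ≤ t) ∨ (r = 8 ∧ 4 ≤ t) ∨ (r = 7 ∧ 5 ≤ t) ∨ (r = 6 ∧ 37 ≤ t)

/-- `g` is the derivative of `ρ ↦ ρ(1-ρ)^t`. -/
noncomputable def gfun (t : ℕ) (ρ : ℝ) : ℝ := (1 - ρ) ^ (t - 1) * (1 - ((t : ℝ) + 1) * ρ)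

open Set

noncomputable def ffun (t : ℕ) (x : ℝ) : ℝ := x * (1 - x) ^ t

noncomputable def gfun' (t : ℕ) (x : ℝ) : ℝ :=
  (t : ℝ) * (1 - x) ^ (t - 2) * (((t : ℝ) + 1) * x - 2)

noncomputable def gfun'' (t : ℕ) (x : ℝ) : ℝ :=
  (t : ℝ) * ((t : ℝ) - 1) * (1 - x) ^ (t - 3) * (3 - ((t : ℝ) + 1) * x)

section MeanValue

variable {u u' : ℝ → ℝ} {a b : ℝ}

lemma hasDerivAt_comp_one_sub_mul (hu : ∀ x, HasDerivAt u (u' x) x) (m x : ℝ) :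
    HasDerivAt (fun y => u (1 - m * y)) (-(m * u' (1 - m * x))) x := by
  have h := (hu (1 - m * x)).comp x (((hasDerivAt_id' x).const_mul m).const_sub 1)
  exact h.congr_deriv (by ring)

lemma strictMonoOn_Icc_of_hasDerivAt_pos (hu : ∀ x, HasDerivAt u (u' x) x)
    (h : ∀ x ∈ Ioo a b, 0 < u' x) : StrictMonoOn u (Icc a b) :=
  strictMonoOn_of_hasDerivWithinAt_pos (convex_Icc a b)
    (fun x _ => (hu x).continuousAt.continuousWithinAt) (fun x _ => (hu x).hasDerivWithinAt)
    (by rwa [interior_Icc])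

lemma strictAntiOn_Icc_of_hasDerivAt_neg (hu : ∀ x, HasDerivAt u (u' x) x)
    (h : ∀ x ∈ Ioo a b, u' x < 0) : StrictAntiOn u (Icc a b) :=
  strictAntiOn_of_hasDerivWithinAt_neg (convex_Icc a b)
    (fun x _ => (hu x).continuousAt.continuousWithinAt) (fun x _ => (hu x).hasDerivWithinAt)
    (by rwa [interior_Icc])

lemma exists_deriv_pos_of_lt (hu : ∀ x, HasDerivAt u (u' x) x) (hab : a < b)
    (h : u a < u b) : ∃ ξ ∈ Ioo a b, 0 < u' ξ := by
  obtain ⟨ξ, hξ, hslope⟩ := exists_hasDerivAt_eq_slope u u' hab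
    (fun x _ => (hu x).continuousAt.continuousWithinAt) (fun x _ => hu x)
  exact ⟨ξ, hξ, hslope ▸ div_pos (sub_pos.2 h) (sub_pos.2 hab)⟩

lemma exists_deriv_neg_of_gt (hu : ∀ x, HasDerivAt u (u' x) x) (hab : a < b)
    (h : u b < u a) : ∃ ξ ∈ Ioo a b, u' ξ < 0 := by
  obtain ⟨ξ, hξ, hpos⟩ := exists_deriv_pos_of_lt (fun x => (hu x).neg) hab (neg_lt_neg h)
  exact ⟨ξ, hξ, neg_pos.1 hpos⟩

lemma eq_zero_of_hasDerivAt_of_eqOn_const (hu : ∀ x, HasDerivAt u (u' x) x) {c : ℝ}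
    (h : EqOn u (fun _ => c) (Ioo a b)) {x : ℝ} (hx : x ∈ Ioo a b) : u' x = 0 :=
  (hu x).unique <| (hasDerivAt_const x c).congr_of_eventuallyEq <|
    Filter.eventually_of_mem (Ioo_mem_nhds hx.1 hx.2) h

lemma eq_zero_of_hasDerivAt_of_nonpos_of_le (hu : ∀ x, HasDerivAt u (u' x) x)
    (h : ∀ x ∈ Ioo a b, u' x ≤ 0) (hle : u a ≤ u b) {x : ℝ} (hx : x ∈ Ioo a b) : u' x = 0 := by
  have hanti : AntitoneOn u (Icc a b) :=
    antitoneOn_of_hasDerivWithinAt_nonpos (convex_Icc a b)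
      (fun x _ => (hu x).continuousAt.continuousWithinAt) (fun x _ => (hu x).hasDerivWithinAt)
      (by rwa [interior_Icc])
  have hab : a ≤ b := hx.1.le.trans hx.2.le
  refine eq_zero_of_hasDerivAt_of_eqOn_const hu (c := u b) (fun y hy => ?_) hx
  have h₁ := hanti ⟨hy.1.le, hy.2.le⟩ ⟨hab, le_rfl⟩ hy.2.le
  have h₂ := hanti ⟨le_rfl, hab⟩ ⟨hy.1.le, hy.2.le⟩ hy.1.le
  exact le_antisymm (h₂.trans hle) h₁

lemma eq_zero_of_hasDerivAt_of_nonneg_of_le (hu : ∀ x, HasDerivAt u (u' x) x)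
    (h : ∀ x ∈ Ioo a b, 0 ≤ u' x) (hle : u b ≤ u a) {x : ℝ} (hx : x ∈ Ioo a b) : u' x = 0 :=
  neg_eq_zero.1 <| eq_zero_of_hasDerivAt_of_nonpos_of_le (fun x => (hu x).neg)
    (fun y hy => neg_nonpos.2 (h y hy)) (neg_le_neg hle) hx

end MeanValue

section Derivatives

variable {t : ℕ}

lemma continuous_ffun : Continuous (ffun t) := by
  unfold ffun; fun_prop

lemma hasDerivAt_ffun (ht : 1 ≤ t) (x : ℝ) : HasDerivAt (ffun t) (gfun t x) x := by
  obtain ⟨s, rfl⟩ := Nat.exists_eq_add_of_le' ht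
  refine ((hasDerivAt_id' x).fun_mul
    (((hasDerivAt_id' x).const_sub 1).fun_pow (s + 1))).congr_deriv ?_
  simp only [gfun, Nat.add_sub_cancel]
  push_cast
  ring

lemma hasDerivAt_gfun (ht : 2 ≤ t) (x : ℝ) : HasDerivAt (gfun t) (gfun' t x) x := by
  obtain ⟨s, rfl⟩ := Nat.exists_eq_add_of_le' ht
  refine ((((hasDerivAt_id' x).const_sub 1).fun_pow (s + 1)).fun_mul
    (((hasDerivAt_id' x).const_mul ((s + 2 : ℕ) + 1 : ℝ)).const_sub 1)).congr_deriv ?_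
  simp only [gfun', Nat.add_sub_cancel]
  push_cast
  ring

lemma hasDerivAt_gfun' (ht : 3 ≤ t) (x : ℝ) : HasDerivAt (gfun' t) (gfun'' t x) x := by
  obtain ⟨s, rfl⟩ := Nat.exists_eq_add_of_le' ht
  have h := ((((hasDerivAt_id' x).const_sub 1).fun_pow (s + 1)).fun_mul
    (((hasDerivAt_id' x).const_mul ((s + 3 : ℕ) + 1 : ℝ)).sub_const 2)).const_mul
    ((s + 3 : ℕ) : ℝ)
  refine (h.congr_deriv ?_).congr_of_eventuallyEq (.of_forall fun y => ?_)
  · simp only [gfun'', Nat.add_sub_cancel]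
    push_cast
    ring
  · simp only [gfun', show s + 3 - 2 = s + 1 by omega]
    ring

end Derivatives

noncomputable def gfunArgmin (t : ℕ) : ℝ := 2 / ((t : ℝ) + 1)

section Shape

variable {t : ℕ} {x y : ℝ}

lemma gfunArgmin_pos : 0 < gfunArgmin t := by
  unfold gfunArgmin; positivity

lemma lt_gfunArgmin_iff : x < gfunArgmin t ↔ ((t : ℝ) + 1) * x < 2 := by
  rw [gfunArgmin, lt_div_iff₀ (by positivity), mul_comm]

lemma gfunArgmin_lt_iff : gfunArgmin t < x ↔ 2 < ((t : ℝ) + 1) * x := by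
  rw [gfunArgmin, div_lt_iff₀ (by positivity), mul_comm]

lemma gfunArgmin_le_one (ht : 1 ≤ t) : gfunArgmin t ≤ 1 := by
  have : (1 : ℝ) ≤ t := by exact_mod_cast ht
  rw [gfunArgmin, div_le_one (by positivity)]
  linarith

lemma gfun'_neg (ht : 1 ≤ t) (hx : x < gfunArgmin t) : gfun' t x < 0 := by
  have hx1 : x < 1 := hx.trans_le (gfunArgmin_le_one ht)
  have hpos : (0 : ℝ) < t * (1 - x) ^ (t - 2) :=
    mul_pos (by exact_mod_cast ht) (pow_pos (by linarith) _)
  exact mul_neg_of_pos_of_neg hpos (by linarith [lt_gfunArgmin_iff.1 hx])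

lemma gfun'_pos (ht : 1 ≤ t) (hx : gfunArgmin t < x) (hx1 : x < 1) : 0 < gfun' t x := by
  have hpos : (0 : ℝ) < t * (1 - x) ^ (t - 2) :=
    mul_pos (by exact_mod_cast ht) (pow_pos (by linarith) _)
  exact mul_pos hpos (by linarith [gfunArgmin_lt_iff.1 hx])

lemma gfun_strictAntiOn (ht : 2 ≤ t) : StrictAntiOn (gfun t) (Icc 0 (gfunArgmin t)) :=
  strictAntiOn_Icc_of_hasDerivAt_neg (hasDerivAt_gfun ht) fun _ hx =>
    gfun'_neg (by omega) hx.2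

lemma gfun_strictMonoOn (ht : 2 ≤ t) : StrictMonoOn (gfun t) (Icc (gfunArgmin t) 1) :=
  strictMonoOn_Icc_of_hasDerivAt_pos (hasDerivAt_gfun ht) fun _ hx =>
    gfun'_pos (by omega) hx.1 hx.2

lemma gfun_zero : gfun t 0 = 1 := by
  simp [gfun]

lemma gfun_one (ht : 2 ≤ t) : gfun t 1 = 0 := by
  rw [gfun, sub_self, zero_pow (by omega), zero_mul]

lemma gfun_lt_one (ht : 2 ≤ t) (hx0 : 0 < x) (hx1 : x ≤ 1) : gfun t x < 1 := by
  have hc := gfunArgmin_le_one (t := t) (by omega)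
  rcases le_total x (gfunArgmin t) with hx | hx
  · simpa [gfun_zero] using
      gfun_strictAntiOn ht ⟨le_rfl, gfunArgmin_pos.le⟩ ⟨hx0.le, hx⟩ hx0
  · have := (gfun_strictMonoOn ht).monotoneOn ⟨hx, hx1⟩ ⟨hc, le_rfl⟩ hx1
    linarith [gfun_one ht]

lemma gfun_gfunArgmin_le (ht : 2 ≤ t) (hy : y ∈ Icc 0 1) : gfun t (gfunArgmin t) ≤ gfun t y := by
  have hc := gfunArgmin_le_one (t := t) (by omega)
  rcases le_total y (gfunArgmin t) with h | h
  · exact (gfun_strictAntiOn ht).antitoneOn ⟨hy.1, h⟩ ⟨gfunArgmin_pos.le, le_rfl⟩ h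
  · exact (gfun_strictMonoOn ht).monotoneOn ⟨le_rfl, hc⟩ ⟨h, hy.2⟩ h

lemma gfun''_pos (ht : 2 ≤ t) (hx : ((t : ℝ) + 1) * x < 3) : 0 < gfun'' t x := by
  have ht' : (2 : ℝ) ≤ t := by exact_mod_cast ht
  have hx1 : x < 1 := by nlinarith
  have hpos : (0 : ℝ) < t * (t - 1) * (1 - x) ^ (t - 3) :=
    mul_pos (by nlinarith) (pow_pos (by linarith) _)
  exact mul_pos hpos (by linarith)

lemma gfun''_nonpos (ht : 1 ≤ t) (hx : 3 ≤ ((t : ℝ) + 1) * x) (hx1 : x ≤ 1) : gfun'' t x ≤ 0 := by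
  have ht' : (1 : ℝ) ≤ t := by exact_mod_cast ht
  have hnonneg : (0 : ℝ) ≤ t * (t - 1) * (1 - x) ^ (t - 3) :=
    mul_nonneg (by nlinarith) (pow_nonneg (by linarith) _)
  exact mul_nonpos_of_nonneg_of_nonpos hnonneg (by linarith)

lemma gfun''_lt_gfun'' (ht : 2 ≤ t) (hxy : x < y) (hy : ((t : ℝ) + 1) * y ≤ 3) :
    gfun'' t y < gfun'' t x := by
  have ht' : (2 : ℝ) ≤ t := by exact_mod_cast ht
  have hy1 : y ≤ 1 := by nlinarith
  have hpow : (1 - y) ^ (t - 3) ≤ (1 - x) ^ (t - 3) := pow_le_pow_left₀ (by linarith) (by linarith) _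
  have hpos : (0 : ℝ) < t * (t - 1) := by nlinarith
  unfold gfun''
  rw [mul_assoc, mul_assoc _ ((1 - x) ^ (t - 3))]
  refine mul_lt_mul_of_pos_left ?_ hpos
  calc (1 - y) ^ (t - 3) * (3 - (t + 1) * y) ≤ (1 - x) ^ (t - 3) * (3 - (t + 1) * y) :=
        mul_le_mul_of_nonneg_right hpow (by linarith)
    _ < (1 - x) ^ (t - 3) * (3 - (t + 1) * x) :=
        mul_lt_mul_of_pos_left (by nlinarith) (pow_pos (by linarith) _)

lemma ffun_strictConvexOn (ht : 2 ≤ t) : StrictConvexOn ℝ (Icc (gfunArgmin t) 1) (ffun t) := by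
  refine StrictMonoOn.strictConvexOn_of_deriv (convex_Icc _ _) continuous_ffun.continuousOn ?_
  rw [show deriv (ffun t) = gfun t from funext fun x => (hasDerivAt_ffun (by omega) x).deriv]
  exact (gfun_strictMonoOn ht).mono interior_subset

end Shape

noncomputable def objective {ι : Type*} [Fintype ι] (t : ℕ) (ρ : ι → ℝ) : ℝ := ∑ i, ffun t (ρ i)

section Simplex

variable {ι : Type*} [Fintype ι] [DecidableEq ι] {t : ℕ}

lemma exists_isMaxOn_objective [Nonempty ι] :
    ∃ ρ ∈ stdSimplex ℝ ι, IsMaxOn (objective t) (stdSimplex ℝ ι) ρ :=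
  (isCompact_stdSimplex ℝ ι).exists_isMaxOn
    ⟨_, single_mem_stdSimplex ℝ (Classical.arbitrary ι)⟩
    (continuous_finsetSum _ fun i _ => continuous_ffun.comp (continuous_apply i)).continuousOn

lemma sum_comp_update_update (φ : ℝ → ℝ) (ρ : ι → ℝ) {i j : ι} (hij : i ≠ j) (a b : ℝ) :
    ∑ k, φ (Function.update (Function.update ρ i a) j b k) =
      ∑ k, φ (ρ k) + (φ a - φ (ρ i)) + (φ b - φ (ρ j)) := by
  rw [add_assoc, ← sub_eq_iff_eq_add', ← Finset.sum_sub_distrib,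
    Fintype.sum_eq_add i j hij fun k hk => by
      simp [Function.update_of_ne hk.1, Function.update_of_ne hk.2]]
  simp [Function.update_of_ne hij]

lemma sum_comp_eq_of_forall_ne (φ : ℝ → ℝ) {ρ : ι → ℝ} {j : ι} {α β : ℝ} (hj : ρ j = β)
    (hα : ∀ i ≠ j, ρ i = α) :
    ∑ i, φ (ρ i) = φ β + ((Fintype.card ι : ℝ) - 1) * φ α := by
  rw [← Finset.add_sum_erase _ _ (Finset.mem_univ j), hj,
    Finset.sum_congr rfl fun i hi => by rw [hα i (Finset.ne_of_mem_erase hi)],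
    Finset.sum_const, Finset.card_erase_of_mem (Finset.mem_univ j), Finset.card_univ,
    nsmul_eq_mul, Nat.cast_sub (Fintype.card_pos_iff.2 ⟨j⟩), Nat.cast_one]

variable {ρ : ι → ℝ}

lemma ffun_add_ffun_le_of_isMaxOn (hρ : ρ ∈ stdSimplex ℝ ι)
    (hmax : IsMaxOn (objective t) (stdSimplex ℝ ι) ρ) {i j : ι} (hij : i ≠ j) {a b : ℝ}
    (ha : 0 ≤ a) (hb : 0 ≤ b) (hab : a + b = ρ i + ρ j) :
    ffun t a + ffun t b ≤ ffun t (ρ i) + ffun t (ρ j) := by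
  set σ := Function.update (Function.update ρ i a) j b
  have hσ : σ ∈ stdSimplex ℝ ι := by
    refine ⟨fun k => ?_, ?_⟩
    · rcases eq_or_ne k j with rfl | hkj
      · simpa [σ] using hb
      rcases eq_or_ne k i with rfl | hki
      · simpa [σ, hkj] using ha
      simpa [σ, hkj, hki] using hρ.1 k
    · have := sum_comp_update_update id ρ hij a b
      simp only [id] at this
      rw [this, hρ.2]
      linarith
  have := isMaxOn_iff.1 hmax σ hσ
  rw [objective, objective, sum_comp_update_update _ ρ hij] at this
  linarith

lemma gfun_le_gfun_of_isMaxOn (ht : 1 ≤ t) (hρ : ρ ∈ stdSimplex ℝ ι)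
    (hmax : IsMaxOn (objective t) (stdSimplex ℝ ι) ρ) {i j : ι} (hij : i ≠ j) (hj : 0 < ρ j) :
    gfun t (ρ i) ≤ gfun t (ρ j) := by
  set ψ : ℝ → ℝ := fun ε => ffun t (ρ i + ε) + ffun t (ρ j - ε)
  have hψmax : IsMaxOn ψ (Icc 0 (ρ j)) 0 := isMaxOn_iff.2 fun ε hε => by
    simpa [ψ] using ffun_add_ffun_le_of_isMaxOn hρ hmax hij (add_nonneg (hρ.1 i) hε.1)
      (sub_nonneg.2 hε.2) (by ring)
  have hψ : HasDerivAt ψ (gfun t (ρ i) - gfun t (ρ j)) 0 := by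
    have h₁ := (hasDerivAt_ffun ht (ρ i + 0)).comp_const_add (ρ i) 0
    have h₂ := (hasDerivAt_ffun ht (ρ j - 0)).comp_const_sub (ρ j) 0
    refine (h₁.add h₂).congr_deriv ?_
    simp [sub_eq_add_neg]
  have := hψmax.localize.hasFDerivWithinAt_nonpos hψ.hasDerivWithinAt.hasFDerivWithinAt
    (mem_posTangentConeAt_of_segment_subset (y := ρ j) (by simp [segment_eq_Icc hj.le]))
  rw [ContinuousLinearMap.toSpanSingleton_apply, smul_eq_mul] at this
  nlinarith

lemma pos_of_isMaxOn (ht : 2 ≤ t) (hρ : ρ ∈ stdSimplex ℝ ι)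
    (hmax : IsMaxOn (objective t) (stdSimplex ℝ ι) ρ) (i : ι) : 0 < ρ i := by
  obtain ⟨j, hj⟩ : ∃ j, 0 < ρ j := by
    by_contra! h
    linarith [Finset.sum_nonpos fun j (_ : j ∈ Finset.univ) => h j, hρ.2]
  refine (hρ.1 i).lt_of_ne' fun hi => ?_
  have hij : i ≠ j := by rintro rfl; linarith
  have := gfun_le_gfun_of_isMaxOn (by omega) hρ hmax hij hj
  rw [hi, gfun_zero] at this
  linarith [gfun_lt_one ht hj (mem_Icc_of_mem_stdSimplex hρ j).2]

lemma gfun_eq_of_isMaxOn (ht : 2 ≤ t) (hρ : ρ ∈ stdSimplex ℝ ι)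
    (hmax : IsMaxOn (objective t) (stdSimplex ℝ ι) ρ) (i j : ι) :
    gfun t (ρ i) = gfun t (ρ j) := by
  rcases eq_or_ne i j with rfl | hij
  · rfl
  exact le_antisymm (gfun_le_gfun_of_isMaxOn (by omega) hρ hmax hij (pos_of_isMaxOn ht hρ hmax j))
    (gfun_le_gfun_of_isMaxOn (by omega) hρ hmax hij.symm (pos_of_isMaxOn ht hρ hmax i))

lemma eq_of_isMaxOn_of_le_gfunArgmin (ht : 2 ≤ t) (hρ : ρ ∈ stdSimplex ℝ ι)
    (hmax : IsMaxOn (objective t) (stdSimplex ℝ ι) ρ) {i j : ι} (hi : ρ i ≤ gfunArgmin t)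
    (hj : ρ j ≤ gfunArgmin t) : ρ i = ρ j :=
  (gfun_strictAntiOn ht).injOn ⟨hρ.1 i, hi⟩ ⟨hρ.1 j, hj⟩ (gfun_eq_of_isMaxOn ht hρ hmax i j)

/-- `f` is strictly convex on `[2/(t+1), 1]`, so two equal coordinates there could be pushed
apart. -/
lemma eq_of_isMaxOn_of_gfunArgmin_lt (ht : 2 ≤ t) (hρ : ρ ∈ stdSimplex ℝ ι)
    (hmax : IsMaxOn (objective t) (stdSimplex ℝ ι) ρ) {i j : ι} (hi : gfunArgmin t < ρ i)
    (hj : gfunArgmin t < ρ j) : i = j := by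
  by_contra hij
  have hc0 : 0 < gfunArgmin t := gfunArgmin_pos
  have hc1 : gfunArgmin t ≤ 1 := gfunArgmin_le_one (by omega)
  set c := gfunArgmin t
  have heq : ρ i = ρ j :=
    (gfun_strictMonoOn ht).injOn ⟨hi.le, (mem_Icc_of_mem_stdSimplex hρ i).2⟩
      ⟨hj.le, (mem_Icc_of_mem_stdSimplex hρ j).2⟩ (gfun_eq_of_isMaxOn ht hρ hmax i j)
  have hsum : ρ i + ρ j ≤ 1 :=
    hρ.2 ▸ Finset.add_le_sum (fun k _ => hρ.1 k) (Finset.mem_univ i) (Finset.mem_univ j) hij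
  have hconv := (ffun_strictConvexOn ht).2 (show c ∈ Icc c 1 from ⟨le_rfl, hc1⟩)
    (show 2 * ρ i - c ∈ Icc c 1 from ⟨by linarith, by linarith⟩) (by linarith)
    (show (0 : ℝ) < 1 / 2 by norm_num) (show (0 : ℝ) < 1 / 2 by norm_num) (by norm_num)
  have hmid : (1 / 2 : ℝ) • c + (1 / 2 : ℝ) • (2 * ρ i - c) = ρ i := by
    simp only [smul_eq_mul]; ring
  rw [hmid, smul_eq_mul, smul_eq_mul] at hconv
  have := ffun_add_ffun_le_of_isMaxOn hρ hmax hij (a := c) (b := 2 * ρ i - c) hc0.le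
    (by linarith) (by linarith)
  rw [← heq] at this
  linarith

lemma isMaxOn_objective_eq_const_or_skew (ht : 2 ≤ t) (hρ : ρ ∈ stdSimplex ℝ ι)
    (hmax : IsMaxOn (objective t) (stdSimplex ℝ ι) ρ) :
    (∀ i, ρ i = 1 / Fintype.card ι) ∨
      ∃ j α β, 0 < α ∧ α < gfunArgmin t ∧ gfunArgmin t < β ∧ β < 1 ∧ gfun t α = gfun t β ∧
        ((Fintype.card ι : ℝ) - 1) * α + β = 1 ∧ ρ j = β ∧ ∀ i ≠ j, ρ i = α := by
  by_cases hconst : ∀ i k, ρ i = ρ k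
  · left
    intro i
    have := sum_comp_eq_of_forall_ne id (j := i) rfl fun k _ => hconst k i
    simp only [id, hρ.2] at this
    have hcard : (0 : ℝ) < Fintype.card ι := by exact_mod_cast Fintype.card_pos_iff.2 ⟨i⟩
    rw [eq_div_iff hcard.ne']
    linarith
  right
  push Not at hconst
  obtain ⟨i, k, hik⟩ : ∃ i k, ρ i < ρ k := by
    obtain ⟨i, k, hne⟩ := hconst
    rcases hne.lt_or_gt with h | h
    exacts [⟨i, k, h⟩, ⟨k, i, h⟩]
  have hg := gfun_eq_of_isMaxOn ht hρ hmax i k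
  have hk1 := (mem_Icc_of_mem_stdSimplex hρ k).2
  have hkc : gfunArgmin t < ρ k := by
    by_contra! h
    exact (gfun_strictAntiOn ht ⟨hρ.1 i, hik.le.trans h⟩ ⟨hρ.1 k, h⟩ hik).ne' hg
  have hic : ρ i < gfunArgmin t := by
    by_contra! h
    exact (gfun_strictMonoOn ht ⟨h, hik.le.trans hk1⟩ ⟨h.trans hik.le, hk1⟩ hik).ne hg
  have hsmall : ∀ m ≠ k, ρ m = ρ i := fun m hm =>
    eq_of_isMaxOn_of_le_gfunArgmin ht hρ hmax
      (not_lt.1 fun h => hm (eq_of_isMaxOn_of_gfunArgmin_lt ht hρ hmax h hkc)) hic.le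
  have hsum := sum_comp_eq_of_forall_ne id rfl hsmall
  simp only [id, hρ.2] at hsum
  have hk : ρ k < 1 := by
    have := Finset.add_le_sum (fun m _ => hρ.1 m) (Finset.mem_univ i) (Finset.mem_univ k)
      (fun h => hik.ne (congrArg ρ h))
    linarith [pos_of_isMaxOn ht hρ hmax i, hρ.2]
  exact ⟨k, ρ i, ρ k, pos_of_isMaxOn ht hρ hmax i, hic, hkc, hk, hg, by linarith, rfl, hsmall⟩

end Simplex

noncomputable def skewValue (r t : ℕ) (x : ℝ) : ℝ :=
  ((r : ℝ) - 1) * ffun t x + ffun t (1 - ((r : ℝ) - 1) * x)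

noncomputable def skewGap (r t : ℕ) (x : ℝ) : ℝ :=
  gfun t x - gfun t (1 - ((r : ℝ) - 1) * x)

noncomputable def skewGap' (r t : ℕ) (x : ℝ) : ℝ :=
  gfun' t x + ((r : ℝ) - 1) * gfun' t (1 - ((r : ℝ) - 1) * x)

noncomputable def skewGap'' (r t : ℕ) (x : ℝ) : ℝ :=
  gfun'' t x - ((r : ℝ) - 1) ^ 2 * gfun'' t (1 - ((r : ℝ) - 1) * x)

lemma skewGap_eq_zero {r t : ℕ} {a b : ℝ} (hg : gfun t a = gfun t b)
    (hsum : ((r : ℝ) - 1) * a + b = 1) : skewGap r t a = 0 := by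
  rw [skewGap, show 1 - ((r : ℝ) - 1) * a = b by linarith, hg, sub_self]

section SkewDerivatives

variable {r t : ℕ}

lemma hasDerivAt_skewValue (ht : 1 ≤ t) (x : ℝ) :
    HasDerivAt (skewValue r t) (((r : ℝ) - 1) * skewGap r t x) x :=
  (((hasDerivAt_ffun ht x).const_mul ((r : ℝ) - 1)).add
    (hasDerivAt_comp_one_sub_mul (hasDerivAt_ffun ht) _ x)).congr_deriv (by rw [skewGap]; ring)

lemma hasDerivAt_skewGap (ht : 2 ≤ t) (x : ℝ) : HasDerivAt (skewGap r t) (skewGap' r t x) x :=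
  ((hasDerivAt_gfun ht x).sub (hasDerivAt_comp_one_sub_mul (hasDerivAt_gfun ht) _ x)).congr_deriv
    (by rw [skewGap']; ring)

lemma hasDerivAt_skewGap' (ht : 3 ≤ t) (x : ℝ) : HasDerivAt (skewGap' r t) (skewGap'' r t x) x :=
  ((hasDerivAt_gfun' ht x).add ((hasDerivAt_comp_one_sub_mul (hasDerivAt_gfun' ht) _ x).const_mul
    ((r : ℝ) - 1))).congr_deriv (by rw [skewGap'']; ring)

end SkewDerivatives

lemma isMaxOn_skewValue {ι : Type*} [Fintype ι] [DecidableEq ι] {t : ℕ} {ρ : ι → ℝ}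
    (hmax : IsMaxOn (objective t) (stdSimplex ℝ ι) ρ) {j : ι} {α β : ℝ} (hj : ρ j = β)
    (hα : ∀ i ≠ j, ρ i = α) (hsum : ((Fintype.card ι : ℝ) - 1) * α + β = 1) :
    IsMaxOn (skewValue (Fintype.card ι) t) (Icc 0 (1 / ((Fintype.card ι : ℝ) - 1))) α := by
  set m : ℝ := (Fintype.card ι : ℝ) - 1
  have hm : 0 ≤ m := by
    have : (1 : ℝ) ≤ Fintype.card ι := by exact_mod_cast Fintype.card_pos_iff.2 ⟨j⟩
    linarith
  refine isMaxOn_iff.2 fun x hx => ?_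
  set σ : ι → ℝ := fun i => if i = j then 1 - m * x else x
  have hσj : σ j = 1 - m * x := if_pos rfl
  have hσ : ∀ i ≠ j, σ i = x := fun i hi => if_neg hi
  have hmx : m * x ≤ 1 := by
    rw [mul_comm]; exact mul_le_of_le_div₀ zero_le_one hm hx.2
  have hσmem : σ ∈ stdSimplex ℝ ι := by
    refine ⟨fun i => ?_, ?_⟩
    · rcases eq_or_ne i j with rfl | hi
      · rw [hσj]; linarith
      · rw [hσ i hi]; exact hx.1
    · have := sum_comp_eq_of_forall_ne id hσj hσ
      simp only [id] at this
      rw [this]; ring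
  have h := isMaxOn_iff.1 hmax σ hσmem
  rw [objective, objective, sum_comp_eq_of_forall_ne _ hσj hσ,
    sum_comp_eq_of_forall_ne _ hj hα] at h
  rw [skewValue, skewValue, show 1 - m * α = β by linarith]
  linarith

section UniqueZero

variable {r t : ℕ}

/-- Write `h' = t (B - A)` with `A(x) = -g'(x)/t > 0` and `B(x) = (r-1) g'(1-(r-1)x)/t`. The ratio
`B/A` is increasing: so is `(r-1)x/(1-x)`, and so is the ratio of the linear factors as long as
`2(r-1) ≤ t-1`. -/
lemma skewGap'_pos_of_nonneg (hr : 2 ≤ r) (hrt : 2 * r ≤ t + 1) {x y : ℝ} (hx : 0 < x)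
    (hxy : x < y) (hy : y < gfunArgmin t) (h : 0 ≤ skewGap' r t x) : 0 < skewGap' r t y := by
  have ht : 3 ≤ t := by omega
  have hm : (1 : ℝ) ≤ (r : ℝ) - 1 := by
    have : (2 : ℝ) ≤ r := by exact_mod_cast hr
    linarith
  have hmt : 2 * ((r : ℝ) - 1) ≤ t - 1 := by
    have : 2 * (r : ℝ) ≤ t + 1 := by exact_mod_cast hrt
    linarith
  have ht' : (3 : ℝ) ≤ t := by exact_mod_cast ht
  set m : ℝ := (r : ℝ) - 1
  set A : ℝ → ℝ := fun z => (1 - z) ^ (t - 2) * (2 - (t + 1) * z) with hA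
  set B : ℝ → ℝ := fun z => m * (m * z) ^ (t - 2) * ((t - 1) - (t + 1) * (m * z)) with hB
  have hform : ∀ z, skewGap' r t z = t * (B z - A z) := fun z => by
    simp only [skewGap', gfun', hA, hB]
    rw [show 1 - (1 - m * z) = m * z by ring]
    ring
  have hyc := lt_gfunArgmin_iff.1 hy
  have hxc : ((t : ℝ) + 1) * x < 2 := by nlinarith
  have hy1 : y < 1 := by nlinarith
  have hAx : 0 < A x := mul_pos (pow_pos (by linarith) _) (by linarith)
  have hAy : 0 < A y := mul_pos (pow_pos (by linarith) _) (by linarith)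
  have hNy : 0 < (t - 1) - (t + 1) * (m * y) := by nlinarith
  have hND : ((t - 1) - (t + 1) * (m * x)) * (2 - (t + 1) * y) ≤
      ((t - 1) - (t + 1) * (m * y)) * (2 - (t + 1) * x) := by
    nlinarith [mul_nonneg (mul_nonneg (by linarith : (0 : ℝ) ≤ t + 1) (by linarith : 0 ≤ y - x))
      (by linarith : 0 ≤ (t : ℝ) - 1 - 2 * m)]
  have hpow : (m * x) ^ (t - 2) * (1 - y) ^ (t - 2) < (m * y) ^ (t - 2) * (1 - x) ^ (t - 2) := by
    rw [← mul_pow, ← mul_pow]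
    exact pow_lt_pow_left₀ (by nlinarith) (by positivity) (by omega)
  have hcross : B x * A y < B y * A x :=
    calc B x * A y
        = m * ((m * x) ^ (t - 2) * (1 - y) ^ (t - 2)) *
            (((t - 1) - (t + 1) * (m * x)) * (2 - (t + 1) * y)) := by
          simp only [hA, hB]; ring
      _ ≤ m * ((m * x) ^ (t - 2) * (1 - y) ^ (t - 2)) *
            (((t - 1) - (t + 1) * (m * y)) * (2 - (t + 1) * x)) := by
          gcongr
      _ < m * ((m * y) ^ (t - 2) * (1 - x) ^ (t - 2)) *
            (((t - 1) - (t + 1) * (m * y)) * (2 - (t + 1) * x)) := by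
          gcongr
      _ = B y * A x := by simp only [hA, hB]; ring
  have htpos : (0 : ℝ) < t := by linarith
  rw [hform] at h ⊢
  have hBAx : A x ≤ B x := sub_nonneg.1 ((mul_nonneg_iff_of_pos_left htpos).1 h)
  have hBAy : A x * A y < A x * B y :=
    calc A x * A y ≤ B x * A y := mul_le_mul_of_nonneg_right hBAx hAy.le
      _ < B y * A x := hcross
      _ = A x * B y := mul_comm _ _
  exact mul_pos htpos (sub_pos.2 (lt_of_mul_lt_mul_left hBAy hAx.le))

lemma eq_of_skewGap_eq_zero (hr : 2 ≤ r) (hrt : 2 * r ≤ t + 1) {x y : ℝ} (hx : 0 < x)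
    (hxc : x < gfunArgmin t) (hy : 0 < y) (hyc : y < gfunArgmin t)
    (hzx : skewGap r t x = 0) (hzy : skewGap r t y = 0) : x = y := by
  have ht : 2 ≤ t := by omega
  wlog hxy : x < y generalizing x y
  · rcases (not_lt.1 hxy).eq_or_lt with h | h
    exacts [h.symm, (this hy hyc hx hxc hzy hzx h).symm]
  obtain ⟨ξ, hξ, hξ0⟩ := exists_hasDerivAt_eq_zero hxy
    (fun z _ => (hasDerivAt_skewGap ht z).continuousAt.continuousWithinAt) (hzx.trans hzy.symm)
    (fun z _ => hasDerivAt_skewGap ht z)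
  have hmono : StrictMonoOn (skewGap r t) (Icc ξ (gfunArgmin t)) :=
    strictMonoOn_Icc_of_hasDerivAt_pos (hasDerivAt_skewGap ht) fun z hz =>
      skewGap'_pos_of_nonneg hr hrt (hx.trans hξ.1) hz.1 hz.2 hξ0.ge
  have hc : skewGap r t (gfunArgmin t) ≤ 0 := by
    have hc0 := gfunArgmin_pos (t := t)
    have hmc : ((r : ℝ) - 1) * gfunArgmin t ≤ 1 := by
      have : 2 * (r : ℝ) ≤ t + 1 := by exact_mod_cast hrt
      rw [gfunArgmin, mul_div_assoc', div_le_one (by positivity)]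
      linarith
    have hm : (0 : ℝ) ≤ (r : ℝ) - 1 := by
      have : (2 : ℝ) ≤ r := by exact_mod_cast hr
      linarith
    exact sub_nonpos.2 (gfun_gfunArgmin_le ht ⟨by linarith, by nlinarith⟩)
  linarith [hmono ⟨hξ.2.le, hyc.le⟩ ⟨hξ.2.le.trans hyc.le, le_rfl⟩ hyc]

end UniqueZero

section SmallestZero

variable {r t : ℕ}

/-- On `(0, 1/r] ⊆ [0, 3/(t+1))` the function `g''` is positive and decreasing; `h''(p) ≤ 0` forces
`g''(1 - (r-1)p) > 0`, and past `p` both terms of `h''` move downwards. -/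
lemma skewGap''_neg_of_nonpos (ht : 2 ≤ t) (hr : 2 ≤ r) (hrt : t + 1 < 3 * r) {p q : ℝ}
    (hp : 0 < p) (hpq : p < q) (hq : q ≤ 1 / r) (h : skewGap'' r t p ≤ 0) :
    skewGap'' r t q < 0 := by
  have hr' : (2 : ℝ) ≤ r := by exact_mod_cast hr
  have hrt' : (t : ℝ) + 1 < 3 * r := by exact_mod_cast hrt
  set m : ℝ := (r : ℝ) - 1
  have hm : 0 < m := by linarith
  have hqr : r * q ≤ 1 := by rwa [le_div_iff₀ (by linarith), mul_comm] at hq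
  have hq3 : ((t : ℝ) + 1) * q < 3 := by nlinarith
  have hyq : 0 ≤ 1 - m * q := by nlinarith
  have hyqp : 1 - m * q < 1 - m * p := by nlinarith
  have hgp : 0 < gfun'' t p := gfun''_pos ht (by nlinarith)
  have hgyp : 0 < gfun'' t (1 - m * p) := by
    rw [skewGap''] at h
    nlinarith
  have hyp3 : ((t : ℝ) + 1) * (1 - m * p) < 3 := by
    by_contra! hyp
    exact (gfun''_nonpos (by omega) hyp (by nlinarith)).not_gt hgyp
  have hgq := gfun''_lt_gfun'' ht hpq hq3.le
  have hgy := gfun''_lt_gfun'' ht hyqp hyp3.le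
  rw [skewGap''] at h ⊢
  nlinarith

lemma exists_skewGap_ne_zero (ht : 3 ≤ t) (hr : 2 ≤ r) (hrt : t + 1 < 3 * r) {a b : ℝ}
    (ha : 0 ≤ a) (hab : a < b) (hb : b ≤ 1 / r) : ∃ x ∈ Ioo a b, skewGap r t x ≠ 0 := by
  by_contra! h
  have h' : ∀ x ∈ Ioo a b, skewGap' r t x = 0 := fun x hx =>
    eq_zero_of_hasDerivAt_of_eqOn_const (hasDerivAt_skewGap (by omega)) (fun y hy => h y hy) hx
  have h'' : ∀ x ∈ Ioo a b, skewGap'' r t x = 0 := fun x hx =>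
    eq_zero_of_hasDerivAt_of_eqOn_const (hasDerivAt_skewGap' ht) (fun y hy => h' y hy) hx
  have hp : a + (b - a) / 3 ∈ Ioo a b := ⟨by linarith, by linarith⟩
  have hq : a + 2 * (b - a) / 3 ∈ Ioo a b := ⟨by linarith, by linarith⟩
  exact (skewGap''_neg_of_nonpos (by omega) hr hrt (by linarith) (by linarith) (by linarith)
    (h'' _ hp).le).ne (h'' _ hq)

lemma le_of_skewGap_eq_zero_of_isMaxOn (ht : 3 ≤ t) (hr : 2 ≤ r) (hrt : t + 1 < 3 * r)
    {α x : ℝ} (hαr : α < 1 / r) (hzα : skewGap r t α = 0)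
    (hmax : IsMaxOn (skewValue r t) (Icc 0 (1 / ((r : ℝ) - 1))) α) (hx : 0 < x)
    (hzx : skewGap r t x = 0) : α ≤ x := by
  by_contra! hxα
  have hr' : (2 : ℝ) ≤ r := by exact_mod_cast hr
  have hm : (0 : ℝ) < (r : ℝ) - 1 := by linarith
  have hr1 : 1 / (r : ℝ) ≤ 1 / ((r : ℝ) - 1) := one_div_le_one_div_of_le hm (by linarith)
  have hα : 0 < α := hx.trans hxα
  have hφ := hasDerivAt_skewValue (r := r) (by omega : 1 ≤ t)
  have hgap : ∀ y, ((r : ℝ) - 1) * skewGap r t y = 0 → skewGap r t y = 0 := fun y hy =>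
    (mul_eq_zero.1 hy).resolve_left hm.ne'
  obtain ⟨y, hy, hpos⟩ : ∃ y ∈ Ioo x α, 0 < skewGap r t y := by
    by_contra! hle
    obtain ⟨z, hz, hne⟩ := exists_skewGap_ne_zero ht hr hrt hx.le hxα hαr.le
    exact hne <| hgap z <| eq_zero_of_hasDerivAt_of_nonpos_of_le hφ
      (fun y hy => mul_nonpos_of_nonneg_of_nonpos hm.le (hle y hy))
      (isMaxOn_iff.1 hmax x ⟨hx.le, by linarith⟩) hz
  obtain ⟨w, hw, hneg⟩ : ∃ w ∈ Ioo α (1 / r), skewGap r t w < 0 := by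
    by_contra! hge
    obtain ⟨z, hz, hne⟩ := exists_skewGap_ne_zero ht hr hrt hα.le hαr le_rfl
    exact hne <| hgap z <| eq_zero_of_hasDerivAt_of_nonneg_of_le hφ
      (fun y hy => mul_nonneg hm.le (hge y hy))
      (isMaxOn_iff.1 hmax _ ⟨by positivity, hr1⟩) hz
  have hzr : skewGap r t (1 / r) = 0 := by
    rw [skewGap, show 1 - ((r : ℝ) - 1) * (1 / r) = 1 / r by field_simp; ring, sub_self]
  have hg := hasDerivAt_skewGap (r := r) (by omega : 2 ≤ t)
  obtain ⟨ξ₁, hξ₁, h₁⟩ := exists_deriv_pos_of_lt hg hy.1 (hzx ▸ hpos)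
  obtain ⟨ξ₂, hξ₂, h₂⟩ := exists_deriv_neg_of_gt hg hw.1 (hzα ▸ hneg)
  obtain ⟨ξ₃, hξ₃, h₃⟩ := exists_deriv_pos_of_lt hg hw.2 (hzr ▸ hneg)
  obtain ⟨η₁, hη₁, h₄⟩ := exists_deriv_neg_of_gt (hasDerivAt_skewGap' ht)
    (hξ₁.2.trans (hy.2.trans hξ₂.1)) (h₂.trans h₁)
  obtain ⟨η₂, hη₂, h₅⟩ := exists_deriv_pos_of_lt (hasDerivAt_skewGap' ht)
    (hξ₂.2.trans hξ₃.1) (h₂.trans h₃)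
  exact (skewGap''_neg_of_nonpos (by omega) hr hrt (hx.trans (hξ₁.1.trans hη₁.1))
    (hη₁.2.trans hη₂.1) (hη₂.2.trans hξ₃.2).le h₄.le).not_gt h₅

end SmallestZero

lemma le_of_skewGap_eq_zero {r t : ℕ} (ht : 3 ≤ t) (hr : 2 ≤ r) {α x : ℝ} (hα : 0 < α)
    (hαc : α < gfunArgmin t) (hαr : α < 1 / r) (hzα : skewGap r t α = 0)
    (hmax : IsMaxOn (skewValue r t) (Icc 0 (1 / ((r : ℝ) - 1))) α) (hx : 0 < x)
    (hxc : x < gfunArgmin t) (hzx : skewGap r t x = 0) : α ≤ x := by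
  rcases le_or_gt (2 * r) (t + 1) with hrt | hrt
  · exact (eq_of_skewGap_eq_zero hr hrt hα hαc hx hxc hzα hzx).le
  · exact le_of_skewGap_eq_zero_of_isMaxOn ht hr (by omega) hαr hzα hmax hx hzx

/-- Theorem 3.5: for legal pairs, the maximum of `F(ρ) = Σ ρᵢ(1-ρᵢ)^t` on the
simplex is attained, and every maximizer is the Turán solution or the skew
solution `(α,…,α,β)` with `g(α) = g(β)` largest. -/
theorem optimal_solution (r t : ℕ) (hleg : Legal r t) :
    (∃ ρ : Fin r → ℝ, ((∀ i, 0 ≤ ρ i) ∧ ∑ i, ρ i = 1) ∧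
      ∀ σ : Fin r → ℝ, ((∀ i, 0 ≤ σ i) ∧ ∑ i, σ i = 1) →
        ∑ i, σ i * (1 - σ i) ^ t ≤ ∑ i, ρ i * (1 - ρ i) ^ t) ∧
    ∀ ρ : Fin r → ℝ, ((∀ i, 0 ≤ ρ i) ∧ ∑ i, ρ i = 1) →
      (∀ σ : Fin r → ℝ, ((∀ i, 0 ≤ σ i) ∧ ∑ i, σ i = 1) →
        ∑ i, σ i * (1 - σ i) ^ t ≤ ∑ i, ρ i * (1 - ρ i) ^ t) →
      ((∀ i, ρ i = 1 / (r : ℝ)) ∨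
        ∃ α β : ℝ, 0 < α ∧ α < 2 / ((t : ℝ) + 1) ∧ 2 / ((t : ℝ) + 1) < β ∧ β < 1 ∧
          gfun t α = gfun t β ∧ ((r : ℝ) - 1) * α + β = 1 ∧
          (∃ j : Fin r, ρ j = β ∧ ∀ i : Fin r, i ≠ j → ρ i = α) ∧
          ∀ α' β' : ℝ, 0 < α' → α' < 2 / ((t : ℝ) + 1) → 2 / ((t : ℝ) + 1) < β' →
            β' < 1 → gfun t α' = gfun t β' → ((r : ℝ) - 1) * α' + β' = 1 →
            gfun t α' ≤ gfun t α) := by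
  have hr : 2 ≤ r := by rcases hleg with ⟨h, -⟩ | ⟨h, -⟩ | ⟨h, -⟩ | ⟨h, -⟩ <;> omega
  have ht : 3 ≤ t := by rcases hleg with ⟨-, h⟩ | ⟨-, h⟩ | ⟨-, h⟩ | ⟨-, h⟩ <;> omega
  have : Nonempty (Fin r) := ⟨⟨0, by omega⟩⟩
  refine ⟨?_, fun ρ hρ hmax => ?_⟩
  · obtain ⟨ρ, hρ, hmax⟩ := exists_isMaxOn_objective (ι := Fin r) (t := t)
    exact ⟨ρ, hρ, isMaxOn_iff.1 hmax⟩
  replace hmax : IsMaxOn (objective t) (stdSimplex ℝ (Fin r)) ρ := isMaxOn_iff.2 hmax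
  rcases isMaxOn_objective_eq_const_or_skew (by omega) hρ hmax with hconst | hskew
  · exact .inl (by simpa using hconst)
  obtain ⟨j, α, β, hα, hαc, hβc, hβ1, hg, hsum, hj, hi⟩ := hskew
  have hskewmax := isMaxOn_skewValue hmax hj hi hsum
  simp only [Fintype.card_fin] at hsum hskewmax
  refine .inr ⟨α, β, hα, hαc, hβc, hβ1, hg, hsum, ⟨j, hj, hi⟩,
    fun α' β' hα' hα'c _ _ hg' hsum' => ?_⟩
  have hαr : α < 1 / r := by
    rw [lt_div_iff₀ (by positivity)]
    linarith [hαc.trans hβc]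
  exact (gfun_strictAntiOn (by omega)).antitoneOn ⟨hα.le, hαc.le⟩ ⟨hα'.le, hα'c.le⟩ <|
    le_of_skewGap_eq_zero ht hr hα hαc hαr (skewGap_eq_zero hg hsum) hskewmax hα' hα'c
      (skewGap_eq_zero hg' hsum')
end
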